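/- Let a_1 ≤ a_2 ≤ a_3 ≤ a_4 ≤ a_5 be integers with a_1+a_2+a_3+a_4 even, λ = (a_1+a_2+a_3+a_4)/2 - 2, a_5 < λ, a_1 + a_4 < a_2 + a_3, and 2a_5 + a_1 - a_2 - a_3 - a_4 ≥ 0. Then (a_5 - (-a_1+a_2+a_3+a_4)/2 + 1) - [binom(λ+2,2) - Σ_{i=1}^4 binom(λ-a_i+2,2) + Σ_{i=2}^4 binom(λ-a_1-a_i+2,2) - binom(λ-a_5+2,2)] = binom(λ+1-a_5, 2) ≥ 1. -/

import Mathlib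

/-
Under the hypotheses every argument of `binom2` below is nonnegative, and there `binom2 a`
is the polynomial `a (a - 1) / 2`. After doubling, the claimed identity is therefore a
polynomial identity modulo the linear relation `2λ = a₁ + a₂ + a₃ + a₄ - 4`, and positivity
comes from `λ + 1 - a₅ ≥ 2`.
-/

/-- `binom(a,2)` with the convention that it vanishes for `a < 2`. -/
def binom2 (a : ℤ) : ℤ := (a.toNat.choose 2 : ℤ)

lemma two_mul_binom2 {a : ℤ} (ha : 0 ≤ a) : 2 * binom2 a = a * (a - 1) := by
  lift a to ℕ using ha with n
  rw [binom2, Int.toNat_natCast]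
  qify
  rw [Nat.cast_choose_two]
  ring

lemma one_le_binom2 {a : ℤ} (ha : 2 ≤ a) : 1 ≤ binom2 a := by
  rw [binom2, Nat.one_le_cast, Nat.one_le_iff_ne_zero]
  exact (Nat.choose_pos (by omega)).ne'

theorem stmt_8_general (a₁ a₂ a₃ a₄ a₅ lam : ℤ)
    (h23 : a₂ ≤ a₃) (h34 : a₃ ≤ a₄) (h45 : a₄ ≤ a₅)
    (hlam : 2 * lam = a₁ + a₂ + a₃ + a₄ - 4)
    (h5 : a₅ < lam) (hsum : a₁ + a₄ < a₂ + a₃) :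
    (a₅ - (-a₁ + a₂ + a₃ + a₄) / 2 + 1) -
      (binom2 (lam + 2)
        - (binom2 (lam - a₁ + 2) + binom2 (lam - a₂ + 2) + binom2 (lam - a₃ + 2)
            + binom2 (lam - a₄ + 2))
        + (binom2 (lam - a₁ - a₂ + 2) + binom2 (lam - a₁ - a₃ + 2) + binom2 (lam - a₁ - a₄ + 2))
        - binom2 (lam - a₅ + 2)) = binom2 (lam + 1 - a₅) ∧
    1 ≤ binom2 (lam + 1 - a₅) := by
  have hhalf : (-a₁ + a₂ + a₃ + a₄) / 2 = lam + 2 - a₁ := by omega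
  refine ⟨mul_left_cancel₀ (two_ne_zero' ℤ) ?_, one_le_binom2 (by linarith)⟩
  rw [hhalf]
  linear_combination
    - two_mul_binom2 (a := lam + 2) (by linarith)
    + two_mul_binom2 (a := lam - a₁ + 2) (by linarith)
    + two_mul_binom2 (a := lam - a₂ + 2) (by linarith)
    + two_mul_binom2 (a := lam - a₃ + 2) (by linarith)
    + two_mul_binom2 (a := lam - a₄ + 2) (by linarith)
    - two_mul_binom2 (a := lam - a₁ - a₂ + 2) (by linarith)
    - two_mul_binom2 (a := lam - a₁ - a₃ + 2) (by linarith)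
    - two_mul_binom2 (a := lam - a₁ - a₄ + 2) (by linarith)
    + two_mul_binom2 (a := lam - a₅ + 2) (by linarith)
    - two_mul_binom2 (a := lam + 1 - a₅) (by linarith)
    + 2 * a₁ * hlam

theorem stmt_8 (a₁ a₂ a₃ a₄ a₅ lam : ℤ)
    (h12 : a₁ ≤ a₂) (h23 : a₂ ≤ a₃) (h34 : a₃ ≤ a₄) (h45 : a₄ ≤ a₅)
    (heven : Even (a₁ + a₂ + a₃ + a₄))
    (hlam : 2 * lam = a₁ + a₂ + a₃ + a₄ - 4)
    (h5 : a₅ < lam) (hsum : a₁ + a₄ < a₂ + a₃)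
    (hcond : 0 ≤ 2 * a₅ + a₁ - a₂ - a₃ - a₄) :
    (a₅ - (-a₁ + a₂ + a₃ + a₄) / 2 + 1) -
      (binom2 (lam + 2)
        - (binom2 (lam - a₁ + 2) + binom2 (lam - a₂ + 2) + binom2 (lam - a₃ + 2)
            + binom2 (lam - a₄ + 2))
        + (binom2 (lam - a₁ - a₂ + 2) + binom2 (lam - a₁ - a₃ + 2) + binom2 (lam - a₁ - a₄ + 2))
        - binom2 (lam - a₅ + 2)) = binom2 (lam + 1 - a₅) ∧
    1 ≤ binom2 (lam + 1 - a₅) :=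
  stmt_8_general a₁ a₂ a₃ a₄ a₅ lam h23 h34 h45 hlam h5 hsum
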